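/- In the construction of the previous statement, suppose conversely that X is a nonempty set of vertices of G' with |X| ≤ C(k,2) and |N_{G'}(X)| ≤ k + m − C(k,2), where k ≥ 2 and n^3 > C(k,2) + k + m. Then X ⊆ H_E, |X| = C(k,2), and the vertices of H_V lying in N_{G'}(X) form a clique of size k in G. -/

import Mathlib

open SimpleGraph

/-- Open neighborhood of a vertex set: vertices outside `X` adjacent to some vertex of `X`. -/
def vb {V : Type*} (G : SimpleGraph V) (X : Set V) : Set V :=
  {v | v ∉ X ∧ ∃ u ∈ X, G.Adj u v}

/-- Vertices reachable from the set `X` in `G - S`. -/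
def reachAvoid {V : Type*} (G : SimpleGraph V) (S X : Set V) : Set V :=
  {v | ∃ x ∈ X, ∃ p : G.Walk x v, ∀ w ∈ p.support, w ∉ S}

/-- `S` is a vertex `(X,Y)`-separator. -/
def isSep {V : Type*} (G : SimpleGraph V) (X Y S : Set V) : Prop :=
  S ⊆ (X ∪ Y)ᶜ ∧ ∀ y ∈ Y, y ∉ reachAvoid G S X

/-- `S` is an important `(X,Y)`-separator. -/
def isImpSep {V : Type*} (G : SimpleGraph V) (X Y S : Set V) : Prop :=
  isSep G X Y S ∧ (∀ S' ⊂ S, ¬ isSep G X Y S') ∧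
    ¬ ∃ T, isSep G X Y T ∧ T.ncard ≤ S.ncard ∧ reachAvoid G S X ⊂ reachAvoid G T X

/-- Edge boundary of a vertex set. -/
def edgeBoundary {V : Type*} (G : SimpleGraph V) (X : Set V) : Set (Sym2 V) :=
  {e | ∃ a b, e = s(a, b) ∧ G.Adj a b ∧ a ∈ X ∧ b ∉ X}

/-- The graph `G'` built from `G`: a clique `H_V` on the vertex type `W` (containing the
vertices of `G` via `ι`), a clique `H_E` on the edges of `G`, and `v` joined to `e`
whenever `v` is incident to `e`. -/
def cliqueCutGraph {V W : Type*} (G : SimpleGraph V) (ι : V ↪ W) :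
    SimpleGraph (W ⊕ G.edgeSet) :=
  SimpleGraph.fromRel (fun x y =>
    match x, y with
    | Sum.inl _, Sum.inl _ => True
    | Sum.inr _, Sum.inr _ => True
    | Sum.inl w, Sum.inr e => ∃ v, ι v = w ∧ v ∈ (e : Sym2 V)
    | _, _ => False)

lemma choose_aux {t k : ℕ} (ht : 2 ≤ t) (htk : t < k) :
    t.choose 2 + (k - t) < k.choose 2 := by
  induction k with
  | zero => omega
  | succ n ih =>
    have h1 : (n+1).choose 2 = n.choose 1 + n.choose 2 := Nat.choose_succ_succ n 1
    rw [Nat.choose_one_right] at h1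
    rcases Nat.lt_or_ge t n with h | h
    · have := ih h; omega
    · have : t = n := by omega
      subst this
      omega


/-- Conversely, any solution `X` in `G'` consists of `C(k,2)` edge-vertices whose
neighborhood in `H_V` forms a `k`-clique of `G`. -/
theorem small_cut_gives_clique {V W : Type*} [Fintype V] [Fintype W] [DecidableEq V]
    (G : SimpleGraph V) [DecidableRel G.Adj] (ι : V ↪ W) (m k : ℕ)
    (hm : G.edgeSet.ncard = m) (hW : k.choose 2 + k + m < Fintype.card W)
    (hk : 2 ≤ k) (X : Set (W ⊕ G.edgeSet)) (hne : X.Nonempty)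
    (hXcard : X.ncard ≤ k.choose 2)
    (hXnbhd : (vb (cliqueCutGraph G ι) X).ncard ≤ k + m - k.choose 2) :
    (∀ x ∈ X, ∃ e : G.edgeSet, x = Sum.inr e) ∧ X.ncard = k.choose 2 ∧
      G.IsClique {v : V | Sum.inl (ι v) ∈ vb (cliqueCutGraph G ι) X} ∧
      {v : V | Sum.inl (ι v) ∈ vb (cliqueCutGraph G ι) X}.ncard = k := by
  set G' := cliqueCutGraph G ι with hG'
  have hll : ∀ w w', G'.Adj (Sum.inl w) (Sum.inl w') ↔ w ≠ w' := by
    intro w w'; simp [hG', cliqueCutGraph, SimpleGraph.fromRel_adj]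
  have hrr : ∀ e e' : G.edgeSet, G'.Adj (Sum.inr e) (Sum.inr e') ↔ e ≠ e' := by
    intro e e'; simp [hG', cliqueCutGraph, SimpleGraph.fromRel_adj]
  have hlr : ∀ (e : G.edgeSet) (w : W),
      G'.Adj (Sum.inr e) (Sum.inl w) ↔ ∃ v, ι v = w ∧ v ∈ (e : Sym2 V) := by
    intro e w; simp [hG', cliqueCutGraph, SimpleGraph.fromRel_adj]
  -- Step A: X contains no H_V vertex
  have hXr : ∀ x ∈ X, ∃ e : G.edgeSet, x = Sum.inr e := by
    by_contra h
    push_neg at h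
    obtain ⟨x, hx, hxr⟩ := h
    obtain ⟨w0, rfl⟩ : ∃ w0, x = Sum.inl w0 := by
      cases x with
      | inl w => exact ⟨w, rfl⟩
      | inr e => exact absurd rfl (hxr e)
    have hsub : Set.range (Sum.inl : W → W ⊕ G.edgeSet) ⊆ X ∪ vb G' X := by
      rintro y ⟨w, rfl⟩
      by_cases hw : Sum.inl w ∈ X
      · exact Or.inl hw
      · refine Or.inr ⟨hw, Sum.inl w0, hx, (hll w0 w).2 ?_⟩
        rintro rfl; exact hw hx
    have hcardrange : (Set.range (Sum.inl : W → W ⊕ G.edgeSet)).ncard = Fintype.card W := by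
      rw [← Set.image_univ, Set.ncard_image_of_injective _ Sum.inl_injective,
        Set.ncard_univ, Nat.card_eq_fintype_card]
    have h1 : (Set.range (Sum.inl : W → W ⊕ G.edgeSet)).ncard ≤ (X ∪ vb G' X).ncard :=
      Set.ncard_le_ncard hsub (Set.toFinite _)
    have h2 : (X ∪ vb G' X).ncard ≤ X.ncard + (vb G' X).ncard :=
      Set.ncard_union_le _ _
    have h3 : k + m - k.choose 2 ≤ k + m := Nat.sub_le _ _
    omega
  -- Step B
  set eX : Set G.edgeSet := {e | Sum.inr e ∈ X} with heX
  have hXeq : X = Sum.inr '' eX := by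
    ext x
    constructor
    · intro hx
      obtain ⟨e, rfl⟩ := hXr x hx
      exact ⟨e, hx, rfl⟩
    · rintro ⟨e, he, rfl⟩; exact he
  have hXcard' : X.ncard = eX.ncard := by
    rw [hXeq, Set.ncard_image_of_injective _ Sum.inr_injective]
  have heXne : eX.Nonempty := by
    obtain ⟨x, hx⟩ := hne
    obtain ⟨e, rfl⟩ := hXr x hx
    exact ⟨e, hx⟩
  -- Step C
  set T : Set V := {v | ∃ e ∈ eX, v ∈ (e : Sym2 V)} with hT
  -- Step D: description of vb
  have hvb : vb G' X = (Sum.inr '' eXᶜ) ∪ (Sum.inl '' (ι '' T)) := by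
    ext y
    cases y with
    | inl w =>
      simp only [vb, Set.mem_setOf_eq, Set.mem_union, Set.mem_image]
      constructor
      · rintro ⟨-, u, hu, hadj⟩
        obtain ⟨e, rfl⟩ := hXr u hu
        obtain ⟨v, hv, hve⟩ := (hlr e w).1 hadj
        exact Or.inr ⟨ι v, ⟨v, ⟨e, hu, hve⟩, rfl⟩, by rw [hv]⟩
      · rintro (⟨e, -, h⟩ | ⟨w', ⟨v, hvT, rfl⟩, h⟩)
        · exact absurd h (by simp)
        · obtain rfl : ι v = w := Sum.inl_injective h
          obtain ⟨e, he, hve⟩ := hvT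
          refine ⟨?_, Sum.inr e, he, (hlr e (ι v)).2 ⟨v, rfl, hve⟩⟩
          intro hmem
          obtain ⟨e', he'⟩ := hXr _ hmem
          exact absurd he' (by simp)
    | inr e =>
      simp only [vb, Set.mem_setOf_eq, Set.mem_union, Set.mem_image]
      constructor
      · rintro ⟨hnx, -⟩
        exact Or.inl ⟨e, hnx, rfl⟩
      · rintro (⟨e', he', h⟩ | ⟨w', -, h⟩)
        · obtain rfl : e' = e := Sum.inr_injective h
          obtain ⟨e0, he0⟩ := heXne
          refine ⟨he', Sum.inr e0, he0, (hrr e0 e').2 ?_⟩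
          rintro rfl; exact he' he0
        · exact absurd h (by simp)
  -- Step E: cardinalities
  have hdisj : Disjoint (Sum.inr '' eXᶜ : Set (W ⊕ G.edgeSet)) (Sum.inl '' (ι '' T)) := by
    rw [Set.disjoint_iff_forall_ne]
    rintro a ⟨e, -, rfl⟩ b ⟨w, -, rfl⟩
    simp
  have hvbcard : (vb G' X).ncard = eXᶜ.ncard + T.ncard := by
    rw [hvb, Set.ncard_union_eq hdisj (Set.toFinite _) (Set.toFinite _),
      Set.ncard_image_of_injective _ Sum.inr_injective,
      Set.ncard_image_of_injective _ Sum.inl_injective,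
      Set.ncard_image_of_injective _ ι.injective]
  have hcompl : eX.ncard + eXᶜ.ncard = m := by
    rw [Set.ncard_add_ncard_compl, ← hm, Nat.card_coe_set_eq]
  have hsm : eX.ncard ≤ m := by omega
  have hs1 : 0 < eX.ncard := (Set.ncard_pos (Set.toFinite _)).2 heXne
  -- Step F: finset counting
  have hTfin : T.Finite := Set.toFinite _
  set TF : Finset V := hTfin.toFinset with hTF
  have heSfin : (Subtype.val '' eX : Set (Sym2 V)).Finite := Set.toFinite _
  set eXF : Finset (Sym2 V) := heSfin.toFinset with heXF
  have heXFcard : eXF.card = eX.ncard := by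
    rw [heXF, ← Set.ncard_eq_toFinset_card _ heSfin,
      Set.ncard_image_of_injective _ Subtype.val_injective]
  have hTFcard : TF.card = T.ncard := by
    rw [hTF, ← Set.ncard_eq_toFinset_card _ hTfin]
  have hsubF : eXF ⊆ TF.offDiag.image Sym2.mk.uncurry := by
    intro p hp
    rw [heXF, Set.Finite.mem_toFinset] at hp
    obtain ⟨e, he, rfl⟩ := hp
    obtain ⟨q, hq⟩ := e
    induction q using Sym2.ind with
    | _ a b =>
      have hadj : G.Adj a b := (SimpleGraph.mem_edgeSet G).1 hq
      have hab : a ≠ b := hadj.ne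
      have haT : a ∈ T := ⟨⟨s(a,b), hq⟩, he, by simp⟩
      have hbT : b ∈ T := ⟨⟨s(a,b), hq⟩, he, by simp⟩
      refine Finset.mem_image.2 ⟨(a, b), Finset.mem_offDiag.2 ⟨?_, ?_, hab⟩, rfl⟩
      · rw [hTF, Set.Finite.mem_toFinset]; exact haT
      · rw [hTF, Set.Finite.mem_toFinset]; exact hbT
  have hcount : eX.ncard ≤ T.ncard.choose 2 := by
    have := Finset.card_le_card hsubF
    rwa [Sym2.card_image_offDiag, heXFcard, hTFcard] at this
  have hT2 : 2 ≤ T.ncard := by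
    obtain ⟨e, he⟩ := heXne
    obtain ⟨q, hq⟩ := e
    induction q using Sym2.ind with
    | _ a b =>
      have hadj : G.Adj a b := (SimpleGraph.mem_edgeSet G).1 hq
      have hab : a ≠ b := hadj.ne
      have hsub : ({a, b} : Set V) ⊆ T := by
        intro v hv
        have hv' : v = a ∨ v = b := by simpa using hv
        exact ⟨⟨s(a,b), hq⟩, he, Sym2.mem_iff.2 hv'⟩
      calc 2 = ({a, b} : Set V).ncard := (Set.ncard_pair hab).symm
        _ ≤ T.ncard := Set.ncard_le_ncard hsub hTfin
  -- arithmetic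
  have hbound : (m - eX.ncard) + T.ncard ≤ k + m - k.choose 2 := by
    rw [hvbcard] at hXnbhd; omega
  have hsc : eX.ncard ≤ k.choose 2 := by omega
  have hTk : T.ncard = k ∧ eX.ncard = k.choose 2 := by
    have htk : T.ncard ≤ k := by omega
    rcases Nat.lt_or_ge T.ncard k with h | h
    · exfalso
      have := choose_aux hT2 h
      omega
    · constructor <;> omega
  -- equality of finsets
  have heq : eXF = TF.offDiag.image Sym2.mk.uncurry := by
    refine Finset.eq_of_subset_of_card_le hsubF ?_
    rw [Sym2.card_image_offDiag, heXFcard, hTFcard, hTk.1, hTk.2]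
  -- clique set identification
  have hset : {v : V | Sum.inl (ι v) ∈ vb G' X} = T := by
    ext v
    simp only [Set.mem_setOf_eq, hvb, Set.mem_union, Set.mem_image]
    constructor
    · rintro (⟨e, -, h⟩ | ⟨w, ⟨u, hu, rfl⟩, h⟩)
      · exact absurd h (by simp)
      · rwa [← ι.injective (Sum.inl_injective h)]
    · intro hv
      exact Or.inr ⟨ι v, ⟨v, hv, rfl⟩, rfl⟩
  refine ⟨hXr, by rw [hXcard']; exact hTk.2, ?_, ?_⟩
  · rw [hset]
    intro u hu v hv huv
    have hmem : s(u, v) ∈ TF.offDiag.image Sym2.mk.uncurry := by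
      refine Finset.mem_image.2 ⟨(u, v), Finset.mem_offDiag.2 ⟨?_, ?_, huv⟩, rfl⟩
      · rw [hTF, Set.Finite.mem_toFinset]; exact hu
      · rw [hTF, Set.Finite.mem_toFinset]; exact hv
    rw [← heq, heXF, Set.Finite.mem_toFinset] at hmem
    obtain ⟨e, -, hval⟩ := hmem
    have hedge : s(u, v) ∈ G.edgeSet := hval ▸ e.2
    exact (SimpleGraph.mem_edgeSet G).1 hedge
  · rw [hset]; exact hTk.1
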